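/- arXiv:2410.18844 — 2 statements merged into one kernel-verified Lean document; each statement's English description precedes it below -/
import Mathlib

section
/- (Convergence of the pessimistic feasible sets, deterministic core of Theorem 2(a).) Let A ∈ ℝ^{d×K} admit a Slater point, i.e. there exists π̄ ∈ Δ_K with (Aπ̄)_i < 0 for every i ∈ {1,…,d}, and let (Ã_t)_{t∈ℕ} be a sequence of matrices in ℝ^{d×K} converging to A entrywise. Define F̂_t := {π ∈ Δ_K : Ã_tπ ≤ 0} and F := {π ∈ Δ_K : Aπ ≤ 0}. Then F̂_t is nonempty for all sufficiently large t, and F̂_t converges to F in the Hausdorff metric: hausdorffDist(F̂_t, F) → 0 as t → ∞. -/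
open Matrix Filter

lemma stmt7_aux_bound {d K : ℕ} (B C : Matrix (Fin d) (Fin K) ℝ) {v : Fin K → ℝ}
    (hv : v ∈ stdSimplex ℝ (Fin K)) {η : ℝ} (hη : 0 ≤ η)
    (h : ∀ i a, |B i a - C i a| ≤ η) (i : Fin d) :
    |B.mulVec v i - C.mulVec v i| ≤ η := by
  have hrw : B.mulVec v i - C.mulVec v i = ∑ a, (B i a - C i a) * v a := by
    simp [Matrix.mulVec, dotProduct, sub_mul, Finset.sum_sub_distrib]
  rw [hrw]
  calc |∑ a, (B i a - C i a) * v a| ≤ ∑ a, |(B i a - C i a) * v a| :=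
        Finset.abs_sum_le_sum_abs _ _
    _ ≤ ∑ a, η * v a := Finset.sum_le_sum fun a _ => by
        rw [abs_mul, abs_of_nonneg (hv.1 a)]
        exact mul_le_mul_of_nonneg_right (h i a) (hv.1 a)
    _ = η := by rw [← Finset.mul_sum, hv.2, mul_one]

lemma stmt7_shrink {K : ℕ} {π πbar : Fin K → ℝ}
    (hπ : π ∈ stdSimplex ℝ (Fin K)) (hπb : πbar ∈ stdSimplex ℝ (Fin K))
    {l : ℝ} (hl0 : 0 ≤ l) (hl1 : l ≤ 1) :
    (1 - l) • π + l • πbar ∈ stdSimplex ℝ (Fin K) ∧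
      dist ((1 - l) • π + l • πbar) π ≤ l := by
  constructor
  · exact convex_stdSimplex ℝ (Fin K) hπ hπb (by linarith) hl0 (by ring)
  · rw [dist_pi_le_iff hl0]
    intro a
    have h1 : π a ≤ 1 := by
      have := Finset.single_le_sum (fun i _ => hπ.1 i) (Finset.mem_univ a)
      rw [hπ.2] at this; exact this
    have h2 : πbar a ≤ 1 := by
      have := Finset.single_le_sum (fun i _ => hπb.1 i) (Finset.mem_univ a)
      rw [hπb.2] at this; exact this
    have h3 := hπ.1 a
    have h4 := hπb.1 a
    have : ((1 - l) • π + l • πbar) a - π a = l * (πbar a - π a) := by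
      simp [Pi.add_apply, Pi.smul_apply, smul_eq_mul]; ring
    rw [Real.dist_eq, this, abs_mul, abs_of_nonneg hl0]
    have : |πbar a - π a| ≤ 1 := abs_le.mpr ⟨by linarith, by linarith⟩
    nlinarith

/-- Convergence of the pessimistic feasible sets.
If `A` admits a Slater point in the simplex and `Ã_t → A` entrywise, then the
pessimistic feasible sets `F̂_t = {π ∈ Δ_K : Ã_tπ ≤ 0}` are eventually nonempty
and converge to `F = {π ∈ Δ_K : Aπ ≤ 0}` in the Hausdorff metric. -/
theorem stmt_7 {d K : ℕ} (A : Matrix (Fin d) (Fin K) ℝ)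
    (At : ℕ → Matrix (Fin d) (Fin K) ℝ)
    (πbar : Fin K → ℝ) (hπbar : πbar ∈ stdSimplex ℝ (Fin K))
    (hSlater : ∀ i, A.mulVec πbar i < 0)
    (hconv : ∀ i a, Tendsto (fun t => At t i a) atTop (nhds (A i a))) :
    (∀ᶠ t in atTop,
        ({π ∈ stdSimplex ℝ (Fin K) | ∀ i, (At t).mulVec π i ≤ 0} : Set (Fin K → ℝ)).Nonempty) ∧
      Tendsto
        (fun t => Metric.hausdorffDist
          {π ∈ stdSimplex ℝ (Fin K) | ∀ i, (At t).mulVec π i ≤ 0}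
          {π ∈ stdSimplex ℝ (Fin K) | ∀ i, A.mulVec π i ≤ 0})
        atTop (nhds 0) := by
  -- a uniform Slater gap
  obtain ⟨c, hc0, hc⟩ : ∃ c : ℝ, 0 < c ∧ ∀ i, A.mulVec πbar i ≤ -c := by
    rcases isEmpty_or_nonempty (Fin d) with h | h
    · exact ⟨1, one_pos, fun i => (h.false i).elim⟩
    · obtain ⟨i0, _, hmin⟩ := Finset.exists_min_image Finset.univ
        (fun i => -(A.mulVec πbar i)) ⟨h.some, Finset.mem_univ _⟩
      refine ⟨-(A.mulVec πbar i0), by linarith [hSlater i0], fun i => ?_⟩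
      have := hmin i (Finset.mem_univ i)
      linarith
  -- uniform eventual approximation on the simplex
  have key : ∀ η : ℝ, 0 < η → ∀ᶠ t in atTop, ∀ v ∈ stdSimplex ℝ (Fin K),
      ∀ i, |(At t).mulVec v i - A.mulVec v i| ≤ η := by
    intro η hη
    have h1 : ∀ᶠ t in atTop, ∀ i a, |At t i a - A i a| ≤ η := by
      rw [eventually_all]
      intro i
      rw [eventually_all]
      intro a
      have := Metric.tendsto_nhds.mp (hconv i a) η hη
      filter_upwards [this] with t ht
      rw [Real.dist_eq] at ht
      exact ht.le
    filter_upwards [h1] with t ht v hv i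
    exact stmt7_aux_bound (At t) A hv hη.le ht i
  -- linearity of mulVec on affine combinations
  have hlin : ∀ (M : Matrix (Fin d) (Fin K) ℝ) (l : ℝ) (x : Fin K → ℝ) (i : Fin d),
      M.mulVec ((1 - l) • x + l • πbar) i =
        (1 - l) * M.mulVec x i + l * M.mulVec πbar i := by
    intro M l x i
    simp [Matrix.mulVec_add, Matrix.mulVec_smul, smul_eq_mul]
  -- eventual nonemptiness
  have hne : ∀ᶠ t in atTop,
      ({π ∈ stdSimplex ℝ (Fin K) | ∀ i, (At t).mulVec π i ≤ 0} : Set (Fin K → ℝ)).Nonempty := by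
    filter_upwards [key (c / 2) (by linarith)] with t ht
    refine ⟨πbar, hπbar, fun i => ?_⟩
    have h1 := abs_le.mp (ht πbar hπbar i)
    have h2 := hc i
    linarith [h1.1, h1.2]
  refine ⟨hne, Metric.tendsto_nhds.mpr fun ε hε => ?_⟩
  set l := min (ε / 2) 1 with hldef
  have hl0 : 0 < l := lt_min (by linarith) one_pos
  have hl1 : l ≤ 1 := min_le_right _ _
  have hlε : l < ε := lt_of_le_of_lt (min_le_left _ _) (by linarith)
  filter_upwards [key (l * c / 2) (by positivity), hne] with t ht htne
  have hd : Metric.hausdorffDist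
      ({π ∈ stdSimplex ℝ (Fin K) | ∀ i, (At t).mulVec π i ≤ 0} : Set (Fin K → ℝ))
      {π ∈ stdSimplex ℝ (Fin K) | ∀ i, A.mulVec π i ≤ 0} ≤ l := by
    apply Metric.hausdorffDist_le_of_mem_dist hl0.le
    · rintro x ⟨hxΔ, hxc⟩
      obtain ⟨hyΔ, hyd⟩ := stmt7_shrink hxΔ hπbar hl0.le hl1
      refine ⟨(1 - l) • x + l • πbar, ⟨hyΔ, fun i => ?_⟩, by
        rw [dist_comm]; exact hyd⟩
      rw [hlin A l x i]
      have h1 := abs_le.mp (ht x hxΔ i)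
      have h2 := hc i
      have h3 := hxc i
      nlinarith
    · rintro y ⟨hyΔ, hyc⟩
      obtain ⟨hxΔ, hxd⟩ := stmt7_shrink hyΔ hπbar hl0.le hl1
      refine ⟨(1 - l) • y + l • πbar, ⟨hxΔ, fun i => ?_⟩, by rw [dist_comm]; exact hxd⟩
      have h1 := abs_le.mp (ht ((1 - l) • y + l • πbar) hxΔ i)
      rw [hlin A l y i] at h1
      have h2 := hc i
      have h3 := hyc i
      nlinarith [h1.1, h1.2]
  rw [Real.dist_eq, sub_zero, abs_of_nonneg Metric.hausdorffDist_nonneg]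
  linarith
end

section
/- (Deterministic cumulative constraint-violation bound.) Let A, Ã_1, …, Ã_t ∈ ℝ^{d×K}, let ω_1, …, ω_t ∈ Δ_K, define the Gram matrices Σ_1 := I_K and Σ_{s+1} := Σ_s + ω_s ω_sᵀ, let f : {1,…,t} → [0,∞) be nondecreasing, and let Γ ≥ 0. Suppose that for every s ≤ t and every i ∈ {1,…,d}: ‖Ã_s^i − A^i‖_{Σ_s} ≤ f(s) and (Ã_s ω_s)_i ≤ −Γ. Then for every s ≤ t, max_i (Aω_s)_i ≤ f(s)·‖ω_s‖_{Σ_s⁻¹} − Γ, and consequently the cumulative constraint violation satisfies Σ_{s=1}^t max_i [(Aω_s)_i]₊ ≤ f(t)·√(2Kt·log(1 + (1+t)/K)), where [x]₊ := max(x, 0). -/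
/-!
Per round, Cauchy–Schwarz for the dual pair `‖·‖_{Σ_s}`, `‖·‖_{Σ_s⁻¹}` bounds
`(A ω_s)_i − (Ã_s ω_s)_i` by `f(s) ‖ω_s‖_{Σ_s⁻¹}`. The sum is the elliptical potential argument:
since `Σ_s ⪰ I` and `‖ω_s‖ ≤ 1`, `q_s = ‖ω_s‖²_{Σ_s⁻¹}` lies in `[0, 1]`, so `q_s ≤ 2 log (1 + q_s)`;
by the matrix determinant lemma these logarithms sum to `log det Σ_{t+1}`, which AM–GM on the
eigenvalues bounds by `K log (1 + t/K)` because `tr Σ_{t+1} ≤ K + t`. Cauchy–Schwarz once more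
gives `∑ √q_s ≤ √(t ∑ q_s)`.
-/

open Matrix Finset

theorem Real.half_le_log_one_add {x : ℝ} (h0 : 0 ≤ x) (h1 : x ≤ 1) : x / 2 ≤ Real.log (1 + x) :=
  calc x / 2 ≤ 2 * x / (x + 2) := by
        rw [div_le_div_iff₀ (by norm_num) (by linarith)]
        nlinarith
    _ ≤ Real.log (1 + x) := Real.le_log_one_add_of_nonneg h0

theorem Finset.sum_sqrt_le_sqrt_card_mul_sum {ι : Type*} (s : Finset ι) {g : ι → ℝ}
    (hg : ∀ i ∈ s, 0 ≤ g i) : ∑ i ∈ s, √(g i) ≤ √(#s * ∑ i ∈ s, g i) := by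
  refine Real.le_sqrt_of_sq_le ?_
  calc (∑ i ∈ s, √(g i)) ^ 2 ≤ #s * ∑ i ∈ s, √(g i) ^ 2 := sq_sum_le_card_mul_sum_sq
    _ = #s * ∑ i ∈ s, g i := by rw [sum_congr rfl fun i hi => Real.sq_sqrt (hg i hi)]

theorem dotProduct_self_le_one_of_mem_stdSimplex {n : Type*} [Fintype n] {w : n → ℝ}
    (hw : w ∈ stdSimplex ℝ n) : w ⬝ᵥ w ≤ 1 :=
  calc w ⬝ᵥ w = ∑ i, w i * w i := rfl
    _ ≤ ∑ i, w i :=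
      sum_le_sum fun i _ => mul_le_of_le_one_right (hw.1 i) (mem_Icc_of_mem_stdSimplex hw i).2
    _ = 1 := hw.2

namespace Matrix

variable {n : Type*} [Fintype n]

theorem PosSemidef.dotProduct_mulVec_sq_le {M : Matrix n n ℝ} (hM : M.PosSemidef)
    (x y : n → ℝ) : (x ⬝ᵥ M *ᵥ y) ^ 2 ≤ (x ⬝ᵥ M *ᵥ x) * (y ⬝ᵥ M *ᵥ y) := by
  let := M.toSeminormedAddCommGroup hM
  let := M.toInnerProductSpace hM
  have hinner : ∀ u v : n → ℝ, (inner ℝ u v : ℝ) = u ⬝ᵥ M *ᵥ v := fun u v => by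
    change (M *ᵥ v) ⬝ᵥ u = _
    exact dotProduct_comm _ _
  simpa only [hinner, sq] using real_inner_mul_inner_self_le x y

variable [DecidableEq n]

theorem det_add_vecMulVec {M : Matrix n n ℝ} (hM : IsUnit M.det) (u v : n → ℝ) :
    (M + vecMulVec u v).det = M.det * (1 + v ⬝ᵥ M⁻¹ *ᵥ u) := by
  rw [vecMulVec_eq Unit, det_add_replicateCol_mul_replicateRow hM, Matrix.mul_assoc,
    ← replicateCol_mulVec, replicateRow_mul_replicateCol]
  simp

theorem PosDef.mulVec_inv_mulVec {M : Matrix n n ℝ} (hM : M.PosDef) (y : n → ℝ) :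
    M *ᵥ (M⁻¹ *ᵥ y) = y := by
  rw [mulVec_mulVec, mul_nonsing_inv _ hM.det_pos.ne'.isUnit, one_mulVec]

theorem PosDef.dotProduct_le_sqrt_mul_sqrt_inv {M : Matrix n n ℝ} (hM : M.PosDef)
    (x y : n → ℝ) : x ⬝ᵥ y ≤ √(x ⬝ᵥ M *ᵥ x) * √(y ⬝ᵥ M⁻¹ *ᵥ y) := by
  set z := M⁻¹ *ᵥ y
  have hMz : M *ᵥ z = y := hM.mulVec_inv_mulVec y
  have hzz : z ⬝ᵥ M *ᵥ z = y ⬝ᵥ z := by rw [hMz, dotProduct_comm]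
  calc x ⬝ᵥ y = x ⬝ᵥ M *ᵥ z := by rw [hMz]
    _ ≤ √((x ⬝ᵥ M *ᵥ x) * (y ⬝ᵥ z)) :=
      Real.le_sqrt_of_sq_le (hzz ▸ hM.posSemidef.dotProduct_mulVec_sq_le x z)
    _ = √(x ⬝ᵥ M *ᵥ x) * √(y ⬝ᵥ z) := Real.sqrt_mul (hM.posSemidef.dotProduct_mulVec_nonneg x) _

theorem PosDef.dotProduct_le_add_mul_sqrt_inv {M : Matrix n n ℝ} (hM : M.PosDef)
    {a b : n → ℝ} {r : ℝ} (hr : √((b - a) ⬝ᵥ M *ᵥ (b - a)) ≤ r) (w : n → ℝ) :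
    a ⬝ᵥ w ≤ b ⬝ᵥ w + r * √(w ⬝ᵥ M⁻¹ *ᵥ w) := by
  have hcs := hM.dotProduct_le_sqrt_mul_sqrt_inv (b - a) (-w)
  rw [mulVec_neg, dotProduct_neg, dotProduct_neg, neg_dotProduct, neg_neg] at hcs
  have hsplit : a ⬝ᵥ w = b ⬝ᵥ w - (b - a) ⬝ᵥ w := by rw [sub_dotProduct]; ring
  linarith [mul_le_mul_of_nonneg_right hr (Real.sqrt_nonneg (w ⬝ᵥ M⁻¹ *ᵥ w))]

theorem PosDef.dotProduct_inv_mulVec_le {M : Matrix n n ℝ} (hM : M.PosDef)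
    (hM1 : (M - 1).PosSemidef) (y : n → ℝ) : y ⬝ᵥ M⁻¹ *ᵥ y ≤ y ⬝ᵥ y := by
  set z := M⁻¹ *ᵥ y
  set q := y ⬝ᵥ z
  have hMz : M *ᵥ z = y := hM.mulVec_inv_mulVec y
  have hq : 0 ≤ q := hM.inv.posSemidef.dotProduct_mulVec_nonneg y
  have hzz : z ⬝ᵥ z ≤ q := by
    have := hM1.dotProduct_mulVec_nonneg z
    rwa [sub_mulVec, one_mulVec, dotProduct_sub, hMz, dotProduct_comm, sub_nonneg] at this
  have hcs := PosSemidef.one.dotProduct_mulVec_sq_le z y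
  simp only [one_mulVec, dotProduct_comm z y] at hcs
  have hy : 0 ≤ y ⬝ᵥ y := by simpa using dotProduct_self_star_nonneg y
  nlinarith [mul_le_mul_of_nonneg_right hzz hy]

theorem PosDef.log_det_le {M : Matrix n n ℝ} (hM : M.PosDef) {c : ℝ} (hc : 0 < c)
    (htr : M.trace ≤ Fintype.card n * c) : Real.log M.det ≤ Fintype.card n * Real.log c := by
  set ev := hM.isHermitian.eigenvalues
  have hev : ∀ i, 0 < ev i := hM.eigenvalues_pos
  have hlog : ∀ i, Real.log (ev i) ≤ ev i / c - 1 + Real.log c := fun i => by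
    have := Real.log_le_sub_one_of_pos (div_pos (hev i) hc)
    rw [Real.log_div (hev i).ne' hc.ne'] at this
    linarith
  have hdet : Real.log M.det = ∑ i, Real.log (ev i) := by
    rw [hM.isHermitian.det_eq_prod_eigenvalues]
    simpa using Real.log_prod (fun i _ => (hev i).ne')
  have hsum : (∑ i, ev i) / c ≤ Fintype.card n := by
    rw [div_le_iff₀ hc]
    simpa [hM.isHermitian.trace_eq_sum_eigenvalues] using htr
  calc Real.log M.det = ∑ i, Real.log (ev i) := hdet
    _ ≤ ∑ i, (ev i / c - 1 + Real.log c) := sum_le_sum fun i _ => hlog i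
    _ = (∑ i, ev i) / c - Fintype.card n + Fintype.card n * Real.log c := by
      simp [sum_add_distrib, sum_sub_distrib, sum_div]
    _ ≤ Fintype.card n * Real.log c := by linarith

end Matrix

section Gram

variable {n : Type*} [Fintype n] [DecidableEq n] {ω : ℕ → n → ℝ} {Gram : ℕ → Matrix n n ℝ}

theorem posSemidef_gram_sub_one (hG1 : Gram 1 = 1)
    (hGrec : ∀ s, 1 ≤ s → Gram (s + 1) = Gram s + vecMulVec (ω s) (ω s)) {s : ℕ} (hs : 1 ≤ s) :
    (Gram s - 1).PosSemidef := by
  induction s, hs using Nat.le_induction with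
  | base => simpa [hG1] using PosSemidef.zero
  | succ s hs ih =>
    rw [hGrec s hs, add_sub_right_comm]
    exact ih.add (posSemidef_vecMulVec_self_star (ω s))

theorem posDef_gram (hG1 : Gram 1 = 1)
    (hGrec : ∀ s, 1 ≤ s → Gram (s + 1) = Gram s + vecMulVec (ω s) (ω s)) {s : ℕ} (hs : 1 ≤ s) :
    (Gram s).PosDef := by
  simpa using PosDef.one.add_posSemidef (posSemidef_gram_sub_one hG1 hGrec hs)

theorem trace_gram_le (hG1 : Gram 1 = 1)
    (hGrec : ∀ s, 1 ≤ s → Gram (s + 1) = Gram s + vecMulVec (ω s) (ω s))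
    (hω : ∀ s, ω s ⬝ᵥ ω s ≤ 1) (t : ℕ) : (Gram (t + 1)).trace ≤ Fintype.card n + t := by
  induction t with
  | zero => simp [hG1]
  | succ t ih =>
    rw [hGrec (t + 1) (by omega), trace_add, trace_vecMulVec]
    push_cast
    linarith [hω (t + 1)]

theorem det_gram_eq_prod (hG1 : Gram 1 = 1)
    (hGrec : ∀ s, 1 ≤ s → Gram (s + 1) = Gram s + vecMulVec (ω s) (ω s)) (t : ℕ) :
    (Gram (t + 1)).det = ∏ s ∈ Icc 1 t, (1 + ω s ⬝ᵥ (Gram s)⁻¹ *ᵥ ω s) := by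
  induction t with
  | zero => simp [hG1]
  | succ t ih =>
    rw [hGrec (t + 1) (by omega),
      det_add_vecMulVec (posDef_gram hG1 hGrec (by omega)).det_pos.ne'.isUnit,
      prod_Icc_succ_top (by omega), ih]

theorem sum_dotProduct_inv_gram_le [Nonempty n] (hG1 : Gram 1 = 1)
    (hGrec : ∀ s, 1 ≤ s → Gram (s + 1) = Gram s + vecMulVec (ω s) (ω s))
    (hω : ∀ s, ω s ⬝ᵥ ω s ≤ 1) (t : ℕ) :
    ∑ s ∈ Icc 1 t, ω s ⬝ᵥ (Gram s)⁻¹ *ᵥ ω s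
      ≤ 2 * Fintype.card n * Real.log (1 + t / Fintype.card n) := by
  set q := fun s => ω s ⬝ᵥ (Gram s)⁻¹ *ᵥ ω s
  have hq : ∀ s ∈ Icc 1 t, 0 ≤ q s ∧ q s ≤ 1 := fun s hs => by
    have hG := posDef_gram hG1 hGrec (mem_Icc.mp hs).1
    exact ⟨hG.inv.posSemidef.dotProduct_mulVec_nonneg (ω s),
      (hG.dotProduct_inv_mulVec_le (posSemidef_gram_sub_one hG1 hGrec (mem_Icc.mp hs).1)
        (ω s)).trans (hω s)⟩
  have hcard : (0 : ℝ) < Fintype.card n := by exact_mod_cast Fintype.card_pos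
  have hlogdet : Real.log (Gram (t + 1)).det
      ≤ Fintype.card n * Real.log (1 + t / Fintype.card n) := by
    refine (posDef_gram hG1 hGrec (by omega)).log_det_le (by positivity) ?_
    rw [mul_one_add, mul_div_cancel₀ _ hcard.ne']
    exact trace_gram_le hG1 hGrec hω t
  calc ∑ s ∈ Icc 1 t, q s ≤ ∑ s ∈ Icc 1 t, 2 * Real.log (1 + q s) :=
        sum_le_sum fun s hs => by linarith [Real.half_le_log_one_add (hq s hs).1 (hq s hs).2]
    _ = 2 * Real.log (Gram (t + 1)).det := by
      rw [← mul_sum, ← Real.log_prod fun s hs => by linarith [(hq s hs).1],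
        det_gram_eq_prod hG1 hGrec]
    _ ≤ 2 * Fintype.card n * Real.log (1 + t / Fintype.card n) := by linarith

end Gram

theorem stmt_14_general {d K : ℕ} (hK : 0 < K) (t : ℕ)
    (A : Matrix (Fin d) (Fin K) ℝ) (At : ℕ → Matrix (Fin d) (Fin K) ℝ)
    (ω : ℕ → Fin K → ℝ) (hω : ∀ s, ω s ∈ stdSimplex ℝ (Fin K))
    (Gram : ℕ → Matrix (Fin K) (Fin K) ℝ)
    (hG1 : Gram 1 = 1)
    (hGrec : ∀ s, 1 ≤ s → Gram (s + 1) = Gram s + vecMulVec (ω s) (ω s))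
    (f : ℕ → ℝ) (hf0 : ∀ s, 0 ≤ f s) (hfmono : MonotoneOn f (Set.Icc 1 t))
    (Γ : ℝ) (hΓ : 0 ≤ Γ)
    (hconf : ∀ s ∈ Finset.Icc 1 t, ∀ i,
      Real.sqrt ((fun a => At s i a - A i a) ⬝ᵥ
        (Gram s).mulVec (fun a => At s i a - A i a)) ≤ f s)
    (hpess : ∀ s ∈ Finset.Icc 1 t, ∀ i, (At s).mulVec (ω s) i ≤ -Γ) :
    (∀ s ∈ Finset.Icc 1 t, ∀ i,
        A.mulVec (ω s) i ≤ f s * Real.sqrt (ω s ⬝ᵥ (Gram s)⁻¹.mulVec (ω s)) - Γ) ∧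
      (∑ s ∈ Finset.Icc 1 t, ⨆ i, max (A.mulVec (ω s) i) 0)
        ≤ f t * Real.sqrt (2 * (K : ℝ) * (t : ℝ) * Real.log (1 + (1 + (t : ℝ)) / (K : ℝ))) := by
  have : Nonempty (Fin K) := Fin.pos_iff_nonempty.mp hK
  set q := fun s => ω s ⬝ᵥ (Gram s)⁻¹ *ᵥ ω s
  have hq0 : ∀ s ∈ Icc 1 t, 0 ≤ q s := fun s hs =>
    (posDef_gram hG1 hGrec (mem_Icc.mp hs).1).inv.posSemidef.dotProduct_mulVec_nonneg (ω s)
  have hround : ∀ s ∈ Icc 1 t, ∀ i, (A *ᵥ ω s) i ≤ f s * √(q s) - Γ := fun s hs i => by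
    have hrow : (A *ᵥ ω s) i ≤ (At s *ᵥ ω s) i + f s * √(q s) :=
      (posDef_gram hG1 hGrec (mem_Icc.mp hs).1).dotProduct_le_add_mul_sqrt_inv (hconf s hs i) _
    linarith [hpess s hs i]
  refine ⟨hround, ?_⟩
  have hviol : ∀ s ∈ Icc 1 t, ⨆ i, max ((A *ᵥ ω s) i) 0 ≤ f t * √(q s) := fun s hs => by
    obtain ⟨hs1, hst⟩ := mem_Icc.mp hs
    have hf : f s * √(q s) ≤ f t * √(q s) :=
      mul_le_mul_of_nonneg_right (hfmono ⟨hs1, hst⟩ ⟨hs1.trans hst, le_rfl⟩ hst) (Real.sqrt_nonneg _)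
    have hnonneg : 0 ≤ f t * √(q s) := mul_nonneg (hf0 t) (Real.sqrt_nonneg _)
    exact Real.iSup_le (fun i => max_le (by linarith [hround s hs i]) hnonneg) hnonneg
  have hpot : ∑ s ∈ Icc 1 t, q s ≤ 2 * K * Real.log (1 + (1 + t) / K) := by
    refine (sum_dotProduct_inv_gram_le hG1 hGrec
      (fun s => dotProduct_self_le_one_of_mem_stdSimplex (hω s)) t).trans ?_
    simp only [Fintype.card_fin]
    gcongr
    simp
  calc ∑ s ∈ Icc 1 t, ⨆ i, max ((A *ᵥ ω s) i) 0 ≤ ∑ s ∈ Icc 1 t, f t * √(q s) := sum_le_sum hviol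
    _ = f t * ∑ s ∈ Icc 1 t, √(q s) := (mul_sum _ _ _).symm
    _ ≤ f t * √(t * ∑ s ∈ Icc 1 t, q s) := by
      refine mul_le_mul_of_nonneg_left ?_ (hf0 t)
      simpa only [Nat.card_Icc, add_tsub_cancel_right] using
        sum_sqrt_le_sqrt_card_mul_sum (Icc 1 t) hq0
    _ ≤ f t * √(t * (2 * K * Real.log (1 + (1 + t) / K))) := by
      exact mul_le_mul_of_nonneg_left (Real.sqrt_le_sqrt (by gcongr)) (hf0 t)
    _ = _ := by ring_nf

/-- Deterministic cumulative constraint-violation bound.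
If for every `s ∈ {1,…,t}` and every constraint `i` the pessimistic estimate
satisfies `‖Ã_s^i − A^i‖_{Σ_s} ≤ f(s)` and `(Ã_s ω_s)_i ≤ −Γ`, then
`max_i (Aω_s)_i ≤ f(s)‖ω_s‖_{Σ_s⁻¹} − Γ` for every `s`, and the cumulative
violation satisfies
`Σ_{s=1}^t max_i [(Aω_s)_i]₊ ≤ f(t)·√(2Kt log(1 + (1+t)/K))`. -/
theorem stmt_14 {d K : ℕ} (hd : 0 < d) (hK : 0 < K) (t : ℕ)
    (A : Matrix (Fin d) (Fin K) ℝ) (At : ℕ → Matrix (Fin d) (Fin K) ℝ)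
    (ω : ℕ → Fin K → ℝ) (hω : ∀ s, ω s ∈ stdSimplex ℝ (Fin K))
    (Gram : ℕ → Matrix (Fin K) (Fin K) ℝ)
    (hG1 : Gram 1 = 1)
    (hGrec : ∀ s, 1 ≤ s → Gram (s + 1) = Gram s + vecMulVec (ω s) (ω s))
    (f : ℕ → ℝ) (hf0 : ∀ s, 0 ≤ f s) (hfmono : MonotoneOn f (Set.Icc 1 t))
    (Γ : ℝ) (hΓ : 0 ≤ Γ)
    (hconf : ∀ s ∈ Finset.Icc 1 t, ∀ i,
      Real.sqrt ((fun a => At s i a - A i a) ⬝ᵥ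
        (Gram s).mulVec (fun a => At s i a - A i a)) ≤ f s)
    (hpess : ∀ s ∈ Finset.Icc 1 t, ∀ i, (At s).mulVec (ω s) i ≤ -Γ) :
    (∀ s ∈ Finset.Icc 1 t, ∀ i,
        A.mulVec (ω s) i ≤ f s * Real.sqrt (ω s ⬝ᵥ (Gram s)⁻¹.mulVec (ω s)) - Γ) ∧
      (∑ s ∈ Finset.Icc 1 t, ⨆ i, max (A.mulVec (ω s) i) 0)
        ≤ f t * Real.sqrt (2 * (K : ℝ) * (t : ℝ) * Real.log (1 + (1 + (t : ℝ)) / (K : ℝ))) :=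
  stmt_14_general hK t A At ω hω Gram hG1 hGrec f hf0 hfmono Γ hΓ hconf hpess
end
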